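/- Uniqueness of kernel representations: let R₁, R₂ ∈ ℝ[z,z⁻¹]^{m×n} be Laurent polynomial matrices, both of full row normal rank m. Then ker∞R₁ = ker∞R₂ if and only if there exists a Laurent unimodular matrix U ∈ ℝ[z,z⁻¹]^{m×m} (i.e. U invertible over ℝ[z,z⁻¹]) such that R₁ = U·R₂. -/

import Mathlib

/-- The shift operator `R(σ)` associated with a Laurent polynomial matrix
`R ∈ ℝ[z,z⁻¹]^{m×n}`: `(R(σ)w)(t)ᵢ = Σⱼ Σ_k coeff_k(Rᵢⱼ) · w(t+k)ⱼ`. -/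
noncomputable def shiftOp {p n : ℕ} (R : Matrix (Fin p) (Fin n) (LaurentPolynomial ℝ))
    (w : ℤ → Fin n → ℝ) : ℤ → Fin p → ℝ :=
  fun t i => ∑ j, Finsupp.sum (R i j).coeff fun k c => c * w (t + k) j

/-- The normal rank of a Laurent polynomial matrix: its rank as a matrix over the field of
fractions of `ℝ[z,z⁻¹]`. -/
noncomputable def normalRank {m : Type*} [Fintype m] {n : ℕ}
    (R : Matrix m (Fin n) (LaurentPolynomial ℝ)) : ℕ :=
  Matrix.rank (R.map (algebraMap (LaurentPolynomial ℝ) (FractionRing (LaurentPolynomial ℝ))))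
/-!
A sequence `u : ℤ → ℝ` is the same thing as an `ℝ`-linear functional `ψ` on `ℝ[T;T⁻¹]`, via
`u t = ψ (T t)`, and under this identification `p(σ)` is precomposition with multiplication by `p`.
So if a row `r` is not in the `ℝ[T;T⁻¹]`-span `M` of the rows of `R`, an `ℝ`-linear functional
on `ℝ[T;T⁻¹]ⁿ` vanishing on `M` but not at `r` is a trajectory in `ker∞ R` not annihilated by
`r`. Hence `ker∞ R₁ = ker∞ R₂` gives `R₂ = X R₁` and `R₁ = Y R₂`; full row normal rank makes `R₁`
left-cancellable, so `Y X = 1`.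
-/

open LaurentPolynomial

noncomputable def seqShift : Multiplicative ℤ →* Module.End ℝ (ℤ → ℝ) where
  toFun k := LinearMap.funLeft ℝ ℝ (· + k.toAdd)
  map_one' := by ext; simp
  map_mul' k l := by
    ext u t
    simp [LinearMap.funLeft, add_assoc, add_comm (Multiplicative.toAdd k)]

noncomputable def laurentShift : ℝ[T;T⁻¹] →ₐ[ℝ] Module.End ℝ (ℤ → ℝ) :=
  AddMonoidAlgebra.lift ℝ (Module.End ℝ (ℤ → ℝ)) ℤ seqShift

lemma laurentShift_apply (p : ℝ[T;T⁻¹]) (u : ℤ → ℝ) (t : ℤ) :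
    laurentShift p u t = p.coeff.sum fun k c => c * u (t + k) := by
  simp [laurentShift, AddMonoidAlgebra.lift_apply, Finsupp.sum, seqShift]

lemma laurentShift_comp_T (ψ : ℝ[T;T⁻¹] →ₗ[ℝ] ℝ) (p : ℝ[T;T⁻¹]) :
    laurentShift p (fun s => ψ (T s)) = fun t => ψ (T t * p) := by
  induction p using LaurentPolynomial.induction_on' with
  | add p q hp hq =>
    funext t
    simp [hp, hq, mul_add]
  | C_mul_T k a =>
    funext t
    rw [← single_eq_C_mul_T, laurentShift_apply, AddMonoidAlgebra.coeff_single,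
      Finsupp.sum_single_index (zero_mul _), ← smul_eq_mul, ← map_smul, smul_eq_C_mul,
      ← single_eq_C_mul_T, T, AddMonoidAlgebra.single_mul_single, one_mul]

lemma shiftOp_apply {p n : ℕ} (R : Matrix (Fin p) (Fin n) ℝ[T;T⁻¹]) (w : ℤ → Fin n → ℝ)
    (t : ℤ) (i : Fin p) : shiftOp R w t i = ∑ j, laurentShift (R i j) (fun s => w s j) t := by
  simp only [shiftOp, laurentShift_apply]

lemma shiftOp_mul {p q n : ℕ} (A : Matrix (Fin p) (Fin q) ℝ[T;T⁻¹])
    (B : Matrix (Fin q) (Fin n) ℝ[T;T⁻¹]) (w : ℤ → Fin n → ℝ) :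
    shiftOp (A * B) w = shiftOp A (shiftOp B w) := by
  have hcol : ∀ l, (fun s => shiftOp B w s l) = ∑ j, laurentShift (B l j) (fun s => w s j) := by
    intro l
    funext s
    rw [shiftOp_apply, Finset.sum_apply]
  funext t i
  rw [shiftOp_apply, shiftOp_apply]
  simp only [hcol, Matrix.mul_apply, map_sum, map_mul, LinearMap.sum_apply,
    Module.End.mul_apply, Finset.sum_apply]
  exact Finset.sum_comm

noncomputable def seqOfDual {n : ℕ} (φ : (Fin n → ℝ[T;T⁻¹]) →ₗ[ℝ] ℝ) : ℤ → Fin n → ℝ :=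
  fun t j => φ (Pi.single j (T t))

lemma shiftOp_seqOfDual {p n : ℕ} (R : Matrix (Fin p) (Fin n) ℝ[T;T⁻¹])
    (φ : (Fin n → ℝ[T;T⁻¹]) →ₗ[ℝ] ℝ) (t : ℤ) (i : Fin p) :
    shiftOp R (seqOfDual φ) t i = φ ((T t : ℝ[T;T⁻¹]) • R i) := by
  have hcol : ∀ j, laurentShift (R i j) (fun s => seqOfDual φ s j) t =
      φ (Pi.single j (T t * R i j)) := fun j =>
    congrFun (laurentShift_comp_T (φ.comp (LinearMap.single ℝ (fun _ => ℝ[T;T⁻¹]) j)) _) t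
  simp only [shiftOp_apply, hcol, ← map_sum, Finset.univ_sum_single]
  rfl

lemma mem_span_rows_of_shiftOp_kernel_subset {p q n : ℕ} {R : Matrix (Fin p) (Fin n) ℝ[T;T⁻¹]}
    {S : Matrix (Fin q) (Fin n) ℝ[T;T⁻¹]}
    (h : {w | shiftOp R w = 0} ⊆ {w | shiftOp S w = 0}) (i : Fin q) :
    S i ∈ Submodule.span ℝ[T;T⁻¹] (Set.range R) := by
  set M := Submodule.span ℝ[T;T⁻¹] (Set.range R)
  by_contra hi
  obtain ⟨φ, hφS, hφM⟩ :=
    (M.restrictScalars ℝ).exists_dual_map_eq_bot_of_notMem hi inferInstance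
  have hφ : ∀ x ∈ M, φ x = 0 := fun x hx => LinearMap.le_ker_iff_map.2 hφM hx
  have hR : shiftOp R (seqOfDual φ) = 0 := by
    funext t i'
    rw [shiftOp_seqOfDual]
    exact hφ _ (M.smul_mem _ (Submodule.subset_span ⟨i', rfl⟩))
  have hS := congrFun (congrFun (h hR) 0) i
  rw [shiftOp_seqOfDual, T_zero, one_smul] at hS
  exact hφS hS

lemma shiftOp_kernel_subset_iff {p q n : ℕ} {R : Matrix (Fin p) (Fin n) ℝ[T;T⁻¹]}
    {S : Matrix (Fin q) (Fin n) ℝ[T;T⁻¹]} :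
    {w | shiftOp R w = 0} ⊆ {w | shiftOp S w = 0} ↔
      ∃ X : Matrix (Fin q) (Fin p) ℝ[T;T⁻¹], S = X * R := by
  constructor
  · intro h
    choose X hX using fun i => (Submodule.mem_span_range_iff_exists_fun _).1
      (mem_span_rows_of_shiftOp_kernel_subset h i)
    refine ⟨Matrix.of X, ?_⟩
    ext i j : 2
    simp [Matrix.mul_apply, ← hX i]
  · rintro ⟨X, rfl⟩ w (hw : shiftOp R w = 0)
    show shiftOp (X * R) w = 0
    rw [shiftOp_mul, hw]
    funext t i
    simp [shiftOp]

lemma mul_left_injective_of_normalRank_eq {ι m : Type*} [Fintype m] {n : ℕ}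
    {R : Matrix m (Fin n) ℝ[T;T⁻¹]} (h : normalRank R = Fintype.card m) :
    Function.Injective fun Z : Matrix ι m ℝ[T;T⁻¹] => Z * R := by
  set φ := algebraMap ℝ[T;T⁻¹] (FractionRing ℝ[T;T⁻¹])
  have hrows : LinearIndependent (FractionRing ℝ[T;T⁻¹]) (R.map φ).row :=
    linearIndependent_iff_card_eq_finrank_span.2 <| by
      rw [Set.finrank, ← Matrix.rank_eq_finrank_span_row]
      exact h.symm
  intro Z₁ Z₂ hZ
  refine Matrix.map_injective (IsFractionRing.injective ℝ[T;T⁻¹] (FractionRing ℝ[T;T⁻¹])) ?_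
  funext i
  apply Matrix.vecMul_injective_iff.2 hrows
  have hZi := congrArg (fun Z => (Z.map φ) i) hZ
  simp only [Matrix.map_mul] at hZi
  exact hZi

theorem kernel_representation_unique_up_to_unimodular_general (m n : ℕ)
    (R₁ R₂ : Matrix (Fin m) (Fin n) (LaurentPolynomial ℝ))
    (h₁ : normalRank R₁ = m) :
    {w : ℤ → Fin n → ℝ | shiftOp R₁ w = 0} = {w : ℤ → Fin n → ℝ | shiftOp R₂ w = 0} ↔
      ∃ U : Matrix (Fin m) (Fin m) (LaurentPolynomial ℝ), IsUnit U ∧ R₁ = U * R₂ := by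
  rw [Set.Subset.antisymm_iff, shiftOp_kernel_subset_iff, shiftOp_kernel_subset_iff]
  constructor
  · rintro ⟨⟨X, hX⟩, ⟨Y, hY⟩⟩
    have hYX : Y * X = 1 :=
      mul_left_injective_of_normalRank_eq (h₁.trans (Fintype.card_fin m).symm)
        (by simp only [Matrix.mul_assoc, ← hX, ← hY, Matrix.one_mul])
    exact ⟨Y, IsUnit.of_mul_eq_one X hYX, hY⟩
  · rintro ⟨U, hU, rfl⟩
    obtain ⟨V, hVU⟩ := hU.exists_left_inv
    exact ⟨⟨V, by rw [← Matrix.mul_assoc, hVU, Matrix.one_mul]⟩, ⟨U, rfl⟩⟩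

/-- uniqueness of kernel representations: let `R₁, R₂ ∈ ℝ[z,z⁻¹]^{m×n}` be
Laurent polynomial matrices, both of full row normal rank `m`. Then `ker∞R₁ = ker∞R₂` if and
only if there exists a Laurent unimodular matrix `U ∈ ℝ[z,z⁻¹]^{m×m}` (i.e. `U` a unit of the
matrix ring over `ℝ[z,z⁻¹]`) such that `R₁ = U·R₂`. -/
theorem kernel_representation_unique_up_to_unimodular (m n : ℕ)
    (R₁ R₂ : Matrix (Fin m) (Fin n) (LaurentPolynomial ℝ))
    (h₁ : normalRank R₁ = m) (h₂ : normalRank R₂ = m) :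
    {w : ℤ → Fin n → ℝ | shiftOp R₁ w = 0} = {w : ℤ → Fin n → ℝ | shiftOp R₂ w = 0} ↔
      ∃ U : Matrix (Fin m) (Fin m) (LaurentPolynomial ℝ), IsUnit U ∧ R₁ = U * R₂ :=
  kernel_representation_unique_up_to_unimodular_general m n R₁ R₂ h₁
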